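/- Let R be a commutative ring with 1, τ a symmetric relation on nonzero non-units, τ_reg = τ ∩ (Reg(R) × Reg(R)), and a a regular non-unit of R. Then the following are equivalent: (i) a is a τ_reg-atom (every τ_reg-factorization a = λ a₁⋯aₙ has a ∼ aᵢ for some i); (ii) a is a τ_reg-very strong atom (a ≅ a and every τ_reg-factorization has a ≅ aᵢ for some i); (iii) a admits only trivial τ_reg-factorizations. -/

import Mathlib

/-- A `τ`-factorization of `a`: `a = λ · a₁ ⋯ aₙ` with `λ` a unit, each `aᵢ` a
nonzero non-unit, and `aᵢ τ aⱼ` for all `i ≠ j` (via `Pairwise` and symmetry). -/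
def IsTauFactorization {R : Type*} [CommRing R] (τ : R → R → Prop)
    (a lam : R) (l : List R) : Prop :=
  IsUnit lam ∧ (∀ b ∈ l, b ≠ 0 ∧ ¬ IsUnit b) ∧ l.Pairwise τ ∧ a = lam * l.prod

/-- Very strong associates: `(a) = (b)` and either `a = b = 0` or every `r`
with `a = r * b` is a unit. -/
def VeryStrongAssociates {R : Type*} [CommRing R] (a b : R) : Prop :=
  Ideal.span {a} = Ideal.span ({b} : Set R) ∧
    ((a = 0 ∧ b = 0) ∨ ∀ r : R, a = r * b → IsUnit r)

/-- `τ_reg := τ ∩ (Reg(R) × Reg(R))`. -/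
def TauReg {R : Type*} [CommRing R] (τ : R → R → Prop) (x y : R) : Prop :=
  τ x y ∧ x ∈ nonZeroDivisors R ∧ y ∈ nonZeroDivisors R

/-!
If `a` is regular, then `a ∣ b` for a factor `b` of `a = λ a₁ ⋯ aₙ` forces the
product of the other factors to be a unit, so there are no other factors.
Conversely, in a trivial factorization `a = λ b` the element `b` is regular,
so `a = r b` forces `r = λ`.
-/

section

variable {R : Type*} [CommRing R] (ρ : R → R → Prop) (a : R)

def IsTauAtom : Prop :=
  ∀ (lam : R) (l : List R), IsTauFactorization ρ a lam l →
    ∃ b ∈ l, Ideal.span {a} = Ideal.span ({b} : Set R)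

def IsVeryStrongTauAtom : Prop :=
  (∀ r : R, a = r * a → IsUnit r) ∧
    ∀ (lam : R) (l : List R), IsTauFactorization ρ a lam l → ∃ b ∈ l, VeryStrongAssociates a b

def HasOnlyTrivialTauFactorizations : Prop :=
  ∀ (lam : R) (l : List R), IsTauFactorization ρ a lam l → l.length = 1

end

namespace IsTauFactorization

variable {R : Type*} [CommRing R] {ρ : R → R → Prop} {a lam b : R} {l : List R}

lemma dvd_of_mem (hf : IsTauFactorization ρ a lam l) (hb : b ∈ l) : b ∣ a :=
  (List.dvd_prod hb).trans (Dvd.intro_left lam hf.2.2.2.symm)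

lemma mem_nonZeroDivisors_of_mem (ha : a ∈ nonZeroDivisors R)
    (hf : IsTauFactorization ρ a lam l) (hb : b ∈ l) : b ∈ nonZeroDivisors R := by
  obtain ⟨c, rfl⟩ := hf.dvd_of_mem hb
  exact (mul_mem_nonZeroDivisors.mp ha).1

lemma length_eq_one_of_dvd_mem (ha : a ∈ nonZeroDivisors R)
    (hf : IsTauFactorization ρ a lam l) (hb : b ∈ l) (hab : a ∣ b) : l.length = 1 := by
  classical
  obtain ⟨-, hnonunit, -, ha_eq⟩ := hf
  obtain ⟨c, rfl⟩ := hab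
  set rest := l.erase (a * c)
  have hcancel : lam * c * rest.prod * a = 1 * a :=
    calc lam * c * rest.prod * a = lam * (a * c * rest.prod) := by ring
      _ = 1 * a := by rw [List.prod_erase hb, ← ha_eq, one_mul]
  have hrest_unit : IsUnit rest.prod :=
    IsUnit.of_mul_eq_one_right _ ((mul_cancel_right_mem_nonZeroDivisors ha).mp hcancel)
  have hrest_nil : rest = [] := List.eq_nil_iff_forall_not_mem.mpr fun x hx =>
    (hnonunit x (List.mem_of_mem_erase hx)).2 (List.prod_isUnit_iff.mp hrest_unit x hx)
  have hlen : rest.length = l.length - 1 := List.length_erase_of_mem hb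
  have hpos := List.length_pos_of_mem hb
  rw [hrest_nil, List.length_nil] at hlen
  omega

lemma veryStrongAssociates_of_singleton (ha : a ∈ nonZeroDivisors R)
    (hf : IsTauFactorization ρ a lam [b]) : VeryStrongAssociates a b := by
  have hb := hf.mem_nonZeroDivisors_of_mem ha (List.mem_singleton_self b)
  obtain ⟨hlam, -, -, ha_eq⟩ := hf
  rw [List.prod_singleton] at ha_eq
  refine ⟨ha_eq ▸ Ideal.span_singleton_mul_left_unit hlam b, Or.inr fun r hr => ?_⟩
  rwa [(mul_cancel_right_mem_nonZeroDivisors hb).mp (hr.symm.trans ha_eq)]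

end IsTauFactorization

theorem isTauAtom_tfae_of_mem_nonZeroDivisors {R : Type*} [CommRing R] (ρ : R → R → Prop)
    {a : R} (ha : a ∈ nonZeroDivisors R) :
    [IsTauAtom ρ a, IsVeryStrongTauAtom ρ a, HasOnlyTrivialTauFactorizations ρ a].TFAE := by
  tfae_have 1 → 3 := fun h lam l hf => by
    obtain ⟨b, hb, hspan⟩ := h lam l hf
    exact hf.length_eq_one_of_dvd_mem ha hb (Ideal.span_singleton_le_span_singleton.mp hspan.ge)
  tfae_have 3 → 2 := fun h => by
    refine ⟨fun r hr => ?_, fun lam l hf => ?_⟩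
    · rw [(mul_cancel_right_mem_nonZeroDivisors ha).mp (hr.symm.trans (one_mul a).symm)]
      exact isUnit_one
    · obtain ⟨b, rfl⟩ := List.length_eq_one_iff.mp (h lam l hf)
      exact ⟨b, List.mem_singleton_self b, hf.veryStrongAssociates_of_singleton ha⟩
  tfae_have 2 → 1 := fun h lam l hf =>
    (h.2 lam l hf).imp fun _ => And.imp_right And.left
  tfae_finish

theorem stmt_13_general {R : Type*} [CommRing R] (τ : R → R → Prop)
    (a : R)
    (ha : a ∈ nonZeroDivisors R) :
    ((∀ (lam : R) (l : List R), IsTauFactorization (TauReg τ) a lam l →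
        ∃ b ∈ l, Ideal.span {a} = Ideal.span ({b} : Set R)) ↔
      ((∀ r : R, a = r * a → IsUnit r) ∧
        ∀ (lam : R) (l : List R), IsTauFactorization (TauReg τ) a lam l →
          ∃ b ∈ l, VeryStrongAssociates a b)) ∧
    (((∀ r : R, a = r * a → IsUnit r) ∧
        ∀ (lam : R) (l : List R), IsTauFactorization (TauReg τ) a lam l →
          ∃ b ∈ l, VeryStrongAssociates a b) ↔
      (∀ (lam : R) (l : List R), IsTauFactorization (TauReg τ) a lam l →
        l.length = 1)) := by
  have h := isTauAtom_tfae_of_mem_nonZeroDivisors (TauReg τ) ha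
  exact ⟨h.out 0 1, h.out 1 2⟩

/-- For a regular non-unit `a`, the notions of `τ_reg`-atom, `τ_reg`-very
strong atom, and `τ_reg`-unrefinable atom coincide. -/
theorem stmt_13 {R : Type*} [CommRing R] (τ : R → R → Prop)
    (hsym : ∀ x y, τ x y → τ y x) (a : R)
    (ha : a ∈ nonZeroDivisors R) (hanu : ¬ IsUnit a) :
    ((∀ (lam : R) (l : List R), IsTauFactorization (TauReg τ) a lam l →
        ∃ b ∈ l, Ideal.span {a} = Ideal.span ({b} : Set R)) ↔
      ((∀ r : R, a = r * a → IsUnit r) ∧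
        ∀ (lam : R) (l : List R), IsTauFactorization (TauReg τ) a lam l →
          ∃ b ∈ l, VeryStrongAssociates a b)) ∧
    (((∀ r : R, a = r * a → IsUnit r) ∧
        ∀ (lam : R) (l : List R), IsTauFactorization (TauReg τ) a lam l →
          ∃ b ∈ l, VeryStrongAssociates a b) ↔
      (∀ (lam : R) (l : List R), IsTauFactorization (TauReg τ) a lam l →
        l.length = 1)) :=
  stmt_13_general τ a ha
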